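/- Any K-supportable connection graph G of the social-event game satisfies d̄_G ≤ γ·K·(K+1), where d̄_G is the average degree of G. -/

import Mathlib

open Finset

/-- An event configuration: each agent holds a finite list of events,
each event being a set of attendees together with a rate. -/
abbrev Config (V : Type*) := V → List (Finset V × ℝ)

section Game

variable {V : Type*} [Fintype V] [DecidableEq V]

/-- A valid strategy for `v`: every event contains `v` and has positive rate. -/
def ValidStrategy (v : V) (s : List (Finset V × ℝ)) : Prop :=
  ∀ e ∈ s, v ∈ e.1 ∧ 0 < e.2

def ConfigValid (cfg : Config V) : Prop := ∀ v, ValidStrategy v (cfg v)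

/-- The meeting rate between `u` and `v` supported by `w` (rate of events held by `w`
attended by both `u` and `v`). -/
def rateBy (cfg : Config V) (w u v : V) : ℝ :=
  ((cfg w).map (fun e => if u ∈ e.1 ∧ v ∈ e.1 then e.2 else 0)).sum

/-- The total meeting rate between `u` and `v`. -/
def meet (cfg : Config V) (u v : V) : ℝ := ∑ w, rateBy cfg w u v

/-- `u` and `v` are connected when their meeting rate is at least the threshold `1`. -/
def connected (cfg : Config V) (u v : V) : Prop := u ≠ v ∧ 1 ≤ meet cfg u v

open scoped Classical in
/-- The set of agents connected to `v`. -/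
noncomputable def nbrs (cfg : Config V) (v : V) : Finset V :=
  univ.filter (fun u => connected cfg u v)

/-- The cost of strategy `s` for agent `v` with parameters `b, c`. -/
def stratCost (b c : ℝ) (v : V) (s : List (Finset V × ℝ)) : ℝ :=
  (s.map (fun e => e.2 * (c * ((e.1.erase v).card : ℝ) + b))).sum

/-- Utility of agent `v`: benefit `a` per connection minus cost of own events. -/
noncomputable def utility (a b c : ℝ) (cfg : Config V) (v : V) : ℝ :=
  a * ((nbrs cfg v).card : ℝ) - stratCost b c v (cfg v)

/-- A configuration is stable when it is valid and is a Nash equilibrium: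
no agent can strictly improve her utility by a unilateral change of strategy. -/
def Stable (a b c : ℝ) (cfg : Config V) : Prop :=
  ConfigValid cfg ∧ ∀ v (s : List (Finset V × ℝ)), ValidStrategy v s →
    utility a b c (Function.update cfg v s) v ≤ utility a b c cfg v

/-- A configuration supports the graph `G` when adjacency coincides with connection. -/
def Supports (cfg : Config V) (G : SimpleGraph V) : Prop :=
  ∀ u v, G.Adj u v ↔ connected cfg u v

end Game

/-!
Removing a guest `u` from all of `w`'s events lowers `w`'s cost by `c · rateBy w w u` and costs
`w` at most the one connection with `u`, so stability forces every invitation rate to be at most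
`γ = a / c`. Since `w` attends all of its own events, `w`'s events give any pair `u ≠ v` a rate at
most the invitation rate of `u` or of `v`, hence at most `γ`, and only pairs inside `w`'s invitees
together with `w` (at most `K + 1` agents) get a positive rate. So each agent contributes at most
`γ · K · (K + 1)` to `∑ v, ∑ u ≠ v, meet u v`, which dominates the total degree of `G`.
-/

section SocialEvent

variable {V : Type*} [DecidableEq V]

def eraseGuest (u : V) (s : List (Finset V × ℝ)) : List (Finset V × ℝ) :=
  s.map fun e => (e.1.erase u, e.2)

lemma rateBy_nonneg {cfg : Config V} {w : V} (hw : ValidStrategy w (cfg w)) (u v : V) :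
    0 ≤ rateBy cfg w u v := by
  refine List.sum_nonneg fun x hx => ?_
  obtain ⟨e, he, rfl⟩ := List.mem_map.1 hx
  split_ifs
  exacts [(hw e he).2.le, le_rfl]

lemma rateBy_comm (cfg : Config V) (w u v : V) : rateBy cfg w u v = rateBy cfg w v u := by
  simp only [rateBy, and_comm]

lemma rateBy_le_rateBy_self {cfg : Config V} {w : V} (hw : ValidStrategy w (cfg w)) (u v : V) :
    rateBy cfg w u v ≤ rateBy cfg w w u := by
  refine List.sum_le_sum fun e he => ?_
  obtain ⟨hwe, he2⟩ := hw e he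
  split_ifs with huv hwu
  exacts [le_rfl, absurd ⟨hwe, huv.1⟩ hwu, he2.le, le_rfl]

lemma ValidStrategy.eraseGuest {w u : V} {s : List (Finset V × ℝ)} (hs : ValidStrategy w s)
    (hu : u ≠ w) : ValidStrategy w (eraseGuest u s) := by
  intro e he
  obtain ⟨e', he', rfl⟩ := List.mem_map.1 he
  exact ⟨mem_erase.2 ⟨hu.symm, (hs e' he').1⟩, (hs e' he').2⟩

lemma stratCost_eraseGuest_add {b c : ℝ} {cfg : Config V} {w u : V}
    (hw : ValidStrategy w (cfg w)) (hu : u ≠ w) :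
    stratCost b c w (eraseGuest u (cfg w)) + c * rateBy cfg w w u = stratCost b c w (cfg w) := by
  rw [stratCost, stratCost, eraseGuest, rateBy, List.map_map, ← List.sum_map_mul_left,
    ← List.sum_map_add]
  refine congrArg List.sum (List.map_congr_left fun e he => ?_)
  have hwe := (hw e he).1
  by_cases hue : u ∈ e.1
  · have hcard : 1 ≤ (e.1.erase w).card := card_pos.2 ⟨u, mem_erase.2 ⟨hu, hue⟩⟩
    simp only [Function.comp_apply, erase_right_comm, hwe, hue, and_self, if_true,
      card_erase_of_mem (mem_erase.2 ⟨hu, hue⟩), Nat.cast_sub hcard, Nat.cast_one]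
    ring
  · simp [hue]

lemma rateBy_update_eraseGuest (cfg : Config V) {w u x y : V} (hx : x ≠ u) (hy : y ≠ u)
    (z : V) : rateBy (Function.update cfg w (eraseGuest u (cfg w))) z x y = rateBy cfg z x y := by
  rcases eq_or_ne z w with rfl | hz
  · rw [rateBy, Function.update_self, rateBy, eraseGuest, List.map_map]
    refine congrArg List.sum (List.map_congr_left fun e _ => ?_)
    simp [mem_erase, hx, hy]
  · rw [rateBy, Function.update_of_ne hz, rateBy]

variable [Fintype V]

/-- The invitees `I_w` of `w`. -/
noncomputable def invitees (cfg : Config V) (w : V) : Finset V :=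
  univ.filter (fun u => u ≠ w ∧ 0 < rateBy cfg w w u)

open scoped Classical in
lemma mem_nbrs {cfg : Config V} {u v : V} : u ∈ nbrs cfg v ↔ connected cfg u v := by
  simp [nbrs]

lemma meet_nonneg {cfg : Config V} (hcfg : ConfigValid cfg) (u v : V) : 0 ≤ meet cfg u v :=
  sum_nonneg fun w _ => rateBy_nonneg (hcfg w) u v

lemma nbrs_subset_insert_nbrs_update_eraseGuest (cfg : Config V) (w u : V) (hu : u ≠ w) :
    nbrs cfg w ⊆ insert u (nbrs (Function.update cfg w (eraseGuest u (cfg w))) w) := by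
  intro x hx
  rcases eq_or_ne x u with rfl | hxu
  · exact mem_insert_self _ _
  obtain ⟨hxw, hmeet⟩ := mem_nbrs.1 hx
  refine mem_insert_of_mem (mem_nbrs.2 ⟨hxw, ?_⟩)
  simpa only [meet, rateBy_update_eraseGuest cfg hxu hu.symm] using hmeet

lemma Stable.rateBy_self_le {a b c : ℝ} {cfg : Config V} (hst : Stable a b c cfg) (ha : 0 ≤ a)
    (hc : 0 < c) {w u : V} (hu : u ≠ w) : rateBy cfg w w u ≤ a / c := by
  obtain ⟨hcfg, hnash⟩ := hst
  have hdev := hnash w _ (ValidStrategy.eraseGuest (hcfg w) hu)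
  have hcost := stratCost_eraseGuest_add (b := b) (c := c) (hcfg w) hu
  have hcard : ((nbrs cfg w).card : ℝ) ≤
      (nbrs (Function.update cfg w (eraseGuest u (cfg w))) w).card + 1 := by
    exact_mod_cast (card_le_card (nbrs_subset_insert_nbrs_update_eraseGuest cfg w u hu)).trans
      (card_insert_le _ _)
  rw [utility, utility, Function.update_self] at hdev
  rw [le_div_iff₀ hc]
  nlinarith

lemma Stable.rateBy_le {a b c : ℝ} {cfg : Config V} (hst : Stable a b c cfg) (ha : 0 ≤ a)
    (hc : 0 < c) (w : V) {u v : V} (huv : u ≠ v) : rateBy cfg w u v ≤ a / c := by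
  have hw := hst.1 w
  rcases eq_or_ne u w with rfl | hu
  · exact hst.rateBy_self_le ha hc huv.symm
  · exact (rateBy_le_rateBy_self hw u v).trans (hst.rateBy_self_le ha hc hu)

lemma rateBy_eq_zero_of_notMem {cfg : Config V} {w u : V} (hw : ValidStrategy w (cfg w))
    (hu : u ∉ insert w (invitees cfg w)) (v : V) : rateBy cfg w u v = 0 := by
  simp only [invitees, mem_insert, mem_filter, mem_univ, true_and, not_or, not_and, not_lt] at hu
  exact le_antisymm ((rateBy_le_rateBy_self hw u v).trans (hu.2 hu.1)) (rateBy_nonneg hw u v)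

lemma sum_sum_erase_le_of_support (S : Finset V) {f : V → V → ℝ} {B : ℝ}
    (hS : ∀ u v, f u v ≠ 0 → u ∈ S ∧ v ∈ S) (hB : ∀ u v, u ≠ v → f u v ≤ B) :
    ∑ v, ∑ u ∈ univ.erase v, f u v ≤ S.card * (S.card - 1) * B := by
  have hsupp : ∑ v, ∑ u ∈ univ.erase v, f u v = ∑ v ∈ S, ∑ u ∈ S.erase v, f u v := by
    rw [← sum_subset (subset_univ S) fun v _ hv => sum_eq_zero fun u _ => by_contra fun h =>
      hv (hS u v h).2]
    refine sum_congr rfl fun v _ => (sum_subset (erase_subset_erase v (subset_univ S))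
      fun u hu huS => by_contra fun h => huS (mem_erase.2 ⟨(mem_erase.1 hu).1, (hS u v h).1⟩)).symm
  calc ∑ v, ∑ u ∈ univ.erase v, f u v
      ≤ ∑ v ∈ S, ∑ _u ∈ S.erase v, B :=
        hsupp.le.trans (sum_le_sum fun v _ => sum_le_sum fun u hu => hB u v (mem_erase.1 hu).1)
    _ = S.card * (S.card - 1) * B := by
        rw [sum_congr rfl fun v hv => by rw [sum_const, card_erase_of_mem hv]]
        rcases S.eq_empty_or_nonempty with rfl | hne
        · simp
        · rw [sum_const, nsmul_eq_mul, nsmul_eq_mul, Nat.cast_sub hne.card_pos, Nat.cast_one]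
          ring

lemma Stable.sum_sum_erase_rateBy_le {a b c : ℝ} {cfg : Config V} (hst : Stable a b c cfg)
    (ha : 0 ≤ a) (hc : 0 < c) {K : ℕ} (w : V) (hK : (invitees cfg w).card ≤ K) :
    ∑ v, ∑ u ∈ univ.erase v, rateBy cfg w u v ≤ a / c * K * (K + 1) := by
  set S := insert w (invitees cfg w)
  have hS : ∀ u v, rateBy cfg w u v ≠ 0 → u ∈ S ∧ v ∈ S := fun u v h =>
    ⟨by_contra fun hu => h (rateBy_eq_zero_of_notMem (hst.1 w) hu v),
      by_contra fun hv => h (rateBy_comm cfg w u v ▸ rateBy_eq_zero_of_notMem (hst.1 w) hv u)⟩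
  have hcard : (S.card : ℝ) ≤ K + 1 := by exact_mod_cast (card_insert_le _ _).trans (by omega)
  have hpairs : (S.card : ℝ) * (S.card - 1) ≤ K * (K + 1) := by
    nlinarith [Nat.cast_nonneg (α := ℝ) S.card]
  calc ∑ v, ∑ u ∈ univ.erase v, rateBy cfg w u v ≤ S.card * (S.card - 1) * (a / c) :=
        sum_sum_erase_le_of_support S hS fun u v => hst.rateBy_le ha hc w
    _ ≤ a / c * K * (K + 1) := by
        nlinarith [mul_le_mul_of_nonneg_right hpairs (div_nonneg ha hc.le)]

lemma Supports.degree_eq_card_nbrs {cfg : Config V} {G : SimpleGraph V} [DecidableRel G.Adj]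
    (hsupp : Supports cfg G) (v : V) : G.degree v = (nbrs cfg v).card := by
  rw [← G.card_neighborFinset_eq_degree]
  congr 1
  ext u
  rw [SimpleGraph.mem_neighborFinset, mem_nbrs, ← hsupp, G.adj_comm]

lemma card_nbrs_le_sum_meet {cfg : Config V} (hcfg : ConfigValid cfg) (v : V) :
    ((nbrs cfg v).card : ℝ) ≤ ∑ u ∈ univ.erase v, meet cfg u v := by
  rw [card_eq_sum_ones, Nat.cast_sum, Nat.cast_one]
  refine (sum_le_sum fun u hu => (mem_nbrs.1 hu).2).trans
    (sum_le_sum_of_subset_of_nonneg (fun u hu => mem_erase.2 ⟨(mem_nbrs.1 hu).1, mem_univ u⟩)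
      fun u _ _ => meet_nonneg hcfg u v)

end SocialEvent

theorem K_supportable_average_degree_general {V : Type*} [Fintype V] [DecidableEq V]
    (a b c : ℝ) (ha : 0 < a) (hc : 0 < c)
    (cfg : Config V) (hst : Stable a b c cfg)
    (G : SimpleGraph V) [DecidableRel G.Adj] (hsupp : Supports cfg G)
    (K : ℕ)
    (hK : ∀ v : V, (Finset.univ.filter (fun u => u ≠ v ∧ 0 < rateBy cfg v v u)).card ≤ K) :
    (∑ v : V, (G.degree v : ℝ)) / (Fintype.card V : ℝ) ≤ (a / c) * K * (K + 1) := by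
  refine div_le_of_le_mul₀ (Nat.cast_nonneg _) (by positivity) ?_
  calc ∑ v, (G.degree v : ℝ)
      ≤ ∑ v, ∑ u ∈ univ.erase v, meet cfg u v := sum_le_sum fun v _ => by
        rw [hsupp.degree_eq_card_nbrs]
        exact card_nbrs_le_sum_meet hst.1 v
    _ = ∑ w, ∑ v, ∑ u ∈ univ.erase v, rateBy cfg w u v := by
        simp only [meet]
        rw [sum_comm]
        exact sum_congr rfl fun v _ => sum_comm
    _ ≤ ∑ _w : V, a / c * K * (K + 1) :=
        sum_le_sum fun w _ => hst.sum_sum_erase_rateBy_le ha.le hc w (hK w)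
    _ = a / c * K * (K + 1) * Fintype.card V := by rw [sum_const, card_univ, nsmul_eq_mul, mul_comm]

/-- Any `K`-supportable connection graph (supported by a stable
configuration in which every agent invites at most `K` distinct individuals) has average
degree at most `γ·K·(K+1)`, where `γ = a/c`. -/
theorem K_supportable_average_degree {V : Type*} [Fintype V] [DecidableEq V]
    (a b c : ℝ) (ha : 0 < a) (hb : 0 < b) (hc : 0 < c)
    (cfg : Config V) (hst : Stable a b c cfg)
    (G : SimpleGraph V) [DecidableRel G.Adj] (hsupp : Supports cfg G)
    (K : ℕ)
    (hK : ∀ v : V, (Finset.univ.filter (fun u => u ≠ v ∧ 0 < rateBy cfg v v u)).card ≤ K) :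
    (∑ v : V, (G.degree v : ℝ)) / (Fintype.card V : ℝ) ≤ (a / c) * K * (K + 1) :=
  K_supportable_average_degree_general a b c ha hc cfg hst G hsupp K hK
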